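/- arXiv:2602.23714 — 10 statements merged into one kernel-verified Lean document; each statement's English description precedes it below -/
import Mathlib

section
/- Let n ≥ 2 and a₁, a₂ ≥ 3 with k < min(a₁,a₂). The cubic polynomial P(x) = x³ - (k-1)x² - (4(a₁-k)(a₂-k) + k(a₂-k) + k(a₁-k))x - 4(a₁-k)(a₂-k) has exactly two negative real roots and one positive real root. -/
lemma quad_zero (a b c x y z : ℝ) (hxy : x ≠ y) (hyz : y ≠ z) (hxz : x ≠ z)
    (hx : a * x ^ 2 + b * x + c = 0) (hy : a * y ^ 2 + b * y + c = 0)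
    (hz : a * z ^ 2 + b * z + c = 0) : a = 0 ∧ b = 0 ∧ c = 0 := by
  have h1 : (a * (x + y) + b) * (x - y) = 0 := by linear_combination hx - hy
  have h2 : (a * (y + z) + b) * (y - z) = 0 := by linear_combination hy - hz
  have h1' : a * (x + y) + b = 0 :=
    (mul_eq_zero.1 h1).resolve_right (sub_ne_zero.2 hxy)
  have h2' : a * (y + z) + b = 0 :=
    (mul_eq_zero.1 h2).resolve_right (sub_ne_zero.2 hyz)
  have h3 : a * (x - z) = 0 := by linear_combination h1' - h2'
  have ha : a = 0 := (mul_eq_zero.1 h3).resolve_right (sub_ne_zero.2 hxz)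
  have hb : b = 0 := by linear_combination h1' - (x + y) * ha
  refine ⟨ha, hb, ?_⟩
  linear_combination hx - x ^ 2 * ha - x * hb

lemma cubic_lemma (K B C : ℝ) (hK : 1 ≤ K) (hC : 0 < C) (hB : C + K < B) :
    ∃ r₁ r₂ r₃ : ℝ, r₁ < 0 ∧ r₂ < 0 ∧ 0 < r₃ ∧
      ∀ x : ℝ, x ^ 3 - (K - 1) * x ^ 2 - B * x - C = (x - r₁) * (x - r₂) * (x - r₃) := by
  set f : ℝ → ℝ := fun x => x ^ 3 - (K - 1) * x ^ 2 - B * x - C with hf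
  have hcont : Continuous f := by fun_prop
  have hfm1 : 0 < f (-1) := by simp only [hf]; nlinarith
  have hf0 : f 0 < 0 := by simp only [hf]; nlinarith
  set M : ℝ := B + K + C + 1 with hM
  have hM1 : 1 ≤ M := by nlinarith
  have hfM : f (-M) < 0 := by
    simp only [hf]
    nlinarith [sq_nonneg M, mul_pos (lt_of_lt_of_le one_pos hM1) (lt_of_lt_of_le one_pos hM1)]
  have hfM' : 0 < f M := by
    simp only [hf]
    nlinarith [sq_nonneg M, mul_pos (lt_of_lt_of_le one_pos hM1) (lt_of_lt_of_le one_pos hM1)]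
  -- root in [-M, -1]
  have h1 : (0 : ℝ) ∈ f '' Set.Icc (-M) (-1) := by
    apply intermediate_value_Icc (by linarith) hcont.continuousOn
    exact ⟨le_of_lt hfM, le_of_lt hfm1⟩
  obtain ⟨r₁, hr₁mem, hr₁⟩ := h1
  -- root in [-1, 0]
  have h2 : (0 : ℝ) ∈ f '' Set.Icc (-1) 0 := by
    apply intermediate_value_Icc' (by linarith) hcont.continuousOn
    exact ⟨le_of_lt hf0, le_of_lt hfm1⟩
  obtain ⟨r₂, hr₂mem, hr₂⟩ := h2
  -- root in [0, M]
  have h3 : (0 : ℝ) ∈ f '' Set.Icc 0 M := by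
    apply intermediate_value_Icc (by linarith) hcont.continuousOn
    exact ⟨le_of_lt hf0, le_of_lt hfM'⟩
  obtain ⟨r₃, hr₃mem, hr₃⟩ := h3
  have hr₁ne : r₁ ≠ -1 := fun h => by rw [h] at hr₁; linarith
  have hr₂ne1 : r₂ ≠ -1 := fun h => by rw [h] at hr₂; linarith
  have hr₂ne0 : r₂ ≠ 0 := fun h => by rw [h] at hr₂; linarith
  have hr₃ne : r₃ ≠ 0 := fun h => by rw [h] at hr₃; linarith
  have h₁lt : r₁ < -1 := lt_of_le_of_ne hr₁mem.2 hr₁ne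
  have h₂lt1 : -1 < r₂ := lt_of_le_of_ne hr₂mem.1 (Ne.symm hr₂ne1)
  have h₂lt0 : r₂ < 0 := lt_of_le_of_ne hr₂mem.2 hr₂ne0
  have h₃pos : 0 < r₃ := lt_of_le_of_ne hr₃mem.1 (Ne.symm hr₃ne)
  refine ⟨r₁, r₂, r₃, by linarith, h₂lt0, h₃pos, ?_⟩
  have h12 : r₁ ≠ r₂ := by intro h; rw [h] at h₁lt; linarith
  have h23 : r₂ ≠ r₃ := by intro h; rw [h] at h₂lt0; linarith
  have h13 : r₁ ≠ r₃ := by intro h; rw [h] at h₁lt; linarith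
  set s₁ := r₁ + r₂ + r₃
  set s₂ := r₁ * r₂ + r₁ * r₃ + r₂ * r₃
  set s₃ := r₁ * r₂ * r₃
  have e1 : (s₁ - (K - 1)) * r₁ ^ 2 + (-B - s₂) * r₁ + (s₃ - C) = 0 := by
    simp only [hf] at hr₁; linear_combination hr₁
  have e2 : (s₁ - (K - 1)) * r₂ ^ 2 + (-B - s₂) * r₂ + (s₃ - C) = 0 := by
    simp only [hf] at hr₂; linear_combination hr₂
  have e3 : (s₁ - (K - 1)) * r₃ ^ 2 + (-B - s₂) * r₃ + (s₃ - C) = 0 := by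
    simp only [hf] at hr₃; linear_combination hr₃
  obtain ⟨ha, hb, hc⟩ := quad_zero _ _ _ _ _ _ h12 h23 h13 e1 e2 e3
  intro x
  linear_combination x ^ 2 * ha + x * hb + hc

theorem stmt_0 (n k a₁ a₂ : ℕ) (hn : 2 ≤ n) (ha₁ : 3 ≤ a₁) (ha₂ : 3 ≤ a₂)
    (hk : 1 ≤ k) (hka : k < min a₁ a₂) :
    ∃ r₁ r₂ r₃ : ℝ, r₁ < 0 ∧ r₂ < 0 ∧ 0 < r₃ ∧
      ∀ x : ℝ, x ^ 3 - ((k : ℝ) - 1) * x ^ 2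
          - (4 * ((a₁ : ℝ) - k) * ((a₂ : ℝ) - k) + k * ((a₂ : ℝ) - k)
              + k * ((a₁ : ℝ) - k)) * x
          - 4 * ((a₁ : ℝ) - k) * ((a₂ : ℝ) - k)
        = (x - r₁) * (x - r₂) * (x - r₃) := by
  rw [lt_min_iff] at hka
  have hk1 : (1 : ℝ) ≤ (k : ℝ) := by exact_mod_cast hk
  have h1 : (1 : ℝ) ≤ (a₁ : ℝ) - k := by
    have : (k : ℝ) + 1 ≤ a₁ := by exact_mod_cast hka.1
    linarith
  have h2 : (1 : ℝ) ≤ (a₂ : ℝ) - k := by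
    have : (k : ℝ) + 1 ≤ a₂ := by exact_mod_cast hka.2
    linarith
  exact cubic_lemma (k : ℝ)
    (4 * ((a₁ : ℝ) - k) * ((a₂ : ℝ) - k) + k * ((a₂ : ℝ) - k) + k * ((a₁ : ℝ) - k))
    (4 * ((a₁ : ℝ) - k) * ((a₂ : ℝ) - k)) hk1 (by nlinarith) (by nlinarith)
end

section
/- Let n ≥ 3. The cubic polynomial g(x) = x³ + (1-3n)x² + 2(n-1)x + 4n(n-1) has exactly one negative real root α₃ and two positive real roots, and the negative root satisfies -n < α₃ < -1. -/
lemma cubic_factor (p q r α β γ : ℝ) (hαβ : α ≠ β) (hβγ : β ≠ γ) (hαγ : α ≠ γ)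
    (h1 : α ^ 3 + p * α ^ 2 + q * α + r = 0)
    (h2 : β ^ 3 + p * β ^ 2 + q * β + r = 0)
    (h3 : γ ^ 3 + p * γ ^ 2 + q * γ + r = 0) :
    ∀ x : ℝ, x ^ 3 + p * x ^ 2 + q * x + r = (x - α) * (x - β) * (x - γ) := by
  have e1 : (α - β) * (α ^ 2 + α * β + β ^ 2 + p * (α + β) + q) = 0 := by
    linear_combination h1 - h2
  have e2 : (β - γ) * (β ^ 2 + β * γ + γ ^ 2 + p * (β + γ) + q) = 0 := by
    linear_combination h2 - h3
  have e1' : α ^ 2 + α * β + β ^ 2 + p * (α + β) + q = 0 :=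
    (mul_eq_zero.1 e1).resolve_left (sub_ne_zero.2 hαβ)
  have e2' : β ^ 2 + β * γ + γ ^ 2 + p * (β + γ) + q = 0 :=
    (mul_eq_zero.1 e2).resolve_left (sub_ne_zero.2 hβγ)
  have e3 : (α - γ) * (α + β + γ + p) = 0 := by linear_combination e1' - e2'
  have hp : p = -(α + β + γ) := by
    have := (mul_eq_zero.1 e3).resolve_left (sub_ne_zero.2 hαγ)
    linarith
  have hq : q = α * β + β * γ + γ * α := by linear_combination e1' - (α + β) * hp
  have hr : r = -(α * β * γ) := by linear_combination h1 - α ^ 2 * hp - α * hq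
  intro x
  rw [hp, hq, hr]; ring

theorem stmt_5 (n : ℕ) (hn : 3 ≤ n) :
    ∃ α₁ α₂ α₃ : ℝ, 0 < α₁ ∧ 0 < α₂ ∧ -(n : ℝ) < α₃ ∧ α₃ < -1 ∧
      ∀ x : ℝ, x ^ 3 + (1 - 3 * (n : ℝ)) * x ^ 2 + 2 * ((n : ℝ) - 1) * x
          + 4 * n * ((n : ℝ) - 1) = (x - α₁) * (x - α₂) * (x - α₃) := by
  have hN : (3 : ℝ) ≤ (n : ℝ) := by exact_mod_cast hn
  set f : ℝ → ℝ := fun x => x ^ 3 + (1 - 3 * (n : ℝ)) * x ^ 2 + 2 * ((n : ℝ) - 1) * x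
      + 4 * n * ((n : ℝ) - 1) with hf
  have hcont : Continuous f := by fun_prop
  have hfn : f n < 0 := by
    simp only [hf]; nlinarith [sq_nonneg ((n : ℝ) - 3)]
  have hf2 : 0 < f 2 := by
    simp only [hf]; nlinarith
  have hf3n : 0 < f (3 * n) := by
    simp only [hf]; nlinarith
  have hfmn : f (-(n : ℝ)) < 0 := by
    simp only [hf]; nlinarith
  have hfm1 : 0 < f (-1) := by
    simp only [hf]; nlinarith
  obtain ⟨α₁, hα₁m, hα₁r⟩ := intermediate_value_Ioo' (by linarith : (2 : ℝ) ≤ n)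
    hcont.continuousOn (Set.mem_Ioo.2 ⟨hfn, hf2⟩)
  obtain ⟨α₂, hα₂m, hα₂r⟩ := intermediate_value_Ioo (by linarith : (n : ℝ) ≤ 3 * n)
    hcont.continuousOn (Set.mem_Ioo.2 ⟨hfn, hf3n⟩)
  obtain ⟨α₃, hα₃m, hα₃r⟩ := intermediate_value_Ioo (by linarith : -(n : ℝ) ≤ -1)
    hcont.continuousOn (Set.mem_Ioo.2 ⟨hfmn, hfm1⟩)
  obtain ⟨h1l, h1r⟩ := hα₁m
  obtain ⟨h2l, h2r⟩ := hα₂m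
  obtain ⟨h3l, h3r⟩ := hα₃m
  refine ⟨α₁, α₂, α₃, by linarith, by linarith, h3l, h3r, ?_⟩
  exact cubic_factor _ _ _ _ _ _ (by linarith) (by linarith) (by linarith) hα₁r hα₂r hα₃r
end

section
/- Let n ≥ 3. Then (3n-1) + √((1-3n)² + 8n) < α₁ + α₂ + |α₃| + (3n-1), where α₁, α₂ > 0 > α₃ are the three real roots of g(x) = x³ + (1-3n)x² + 2(n-1)x + 4n(n-1). -/
theorem stmt_6 (n : ℕ) (hn : 3 ≤ n) (α₁ α₂ α₃ : ℝ)
    (h₁ : 0 < α₁) (h₂ : 0 < α₂) (h₃ : α₃ < 0)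
    (hroots : ∀ x : ℝ, x ^ 3 + (1 - 3 * (n : ℝ)) * x ^ 2 + 2 * ((n : ℝ) - 1) * x
        + 4 * n * ((n : ℝ) - 1) = (x - α₁) * (x - α₂) * (x - α₃)) :
    (3 * (n : ℝ) - 1) + Real.sqrt ((1 - 3 * (n : ℝ)) ^ 2 + 8 * n)
      < α₁ + α₂ + |α₃| + (3 * (n : ℝ) - 1) := by
  have hn' : (3 : ℝ) ≤ n := by exact_mod_cast hn
  have h0 := hroots 0
  have hp := hroots 1
  have hm := hroots (-1)
  -- sum of roots
  have hsum : α₁ + α₂ + α₃ = 3 * (n : ℝ) - 1 := by nlinarith [h0, hp, hm]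
  -- α₃ < -1
  have hlt : α₃ < -1 := by
    by_contra h
    push_neg at h
    nlinarith [mul_pos (by linarith : (0:ℝ) < 1 + α₁) (by linarith : (0:ℝ) < 1 + α₂),
      mul_nonneg (mul_pos (by linarith : (0:ℝ) < 1 + α₁) (by linarith : (0:ℝ) < 1 + α₂)).le
        (by linarith : (0:ℝ) ≤ 1 + α₃)]
  have habs : |α₃| = -α₃ := abs_of_neg h₃
  rw [habs]
  have hpos : 0 < α₁ + α₂ + -α₃ := by linarith
  have key : Real.sqrt ((1 - 3 * (n : ℝ)) ^ 2 + 8 * n) < α₁ + α₂ + -α₃ := by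
    rw [show α₁ + α₂ + -α₃ = 3 * (n : ℝ) - 1 - 2 * α₃ by linarith]
    have h2 : (0:ℝ) < 3 * (n : ℝ) - 1 - 2 * α₃ := by linarith
    rw [Real.sqrt_lt' h2]
    nlinarith [mul_pos (by linarith : (0:ℝ) < -α₃) (by linarith : (0:ℝ) < -α₃ - 1)]
  linarith
end

section
/- Let n ≥ 3 and l ≥ 3. The cubic polynomial P(x) = x³ + (n + 1 - 2nl)x² + (2n + ln² - 2n² - 2)x + (2ln² - 4n) has exactly one negative real root and two positive real roots. -/
/-- A monic cubic with two distinct roots factors completely. -/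
lemma cubic_factor_s7 (a b c r₁ r₂ : ℝ) (h12 : r₁ ≠ r₂)
    (h1 : r₁ ^ 3 + a * r₁ ^ 2 + b * r₁ + c = 0)
    (h2 : r₂ ^ 3 + a * r₂ ^ 2 + b * r₂ + c = 0) :
    ∀ x : ℝ, x ^ 3 + a * x ^ 2 + b * x + c
      = (x - r₁) * (x - r₂) * (x - (-a - r₁ - r₂)) := by
  have hd : r₁ - r₂ ≠ 0 := sub_ne_zero.mpr h12
  have hE : r₁ ^ 2 + r₁ * r₂ + r₂ ^ 2 + a * (r₁ + r₂) + b = 0 := by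
    apply mul_left_cancel₀ hd
    ring_nf
    linear_combination h1 - h2
  have hC : c - r₁ * r₂ * (a + r₁ + r₂) = 0 := by
    linear_combination h1 - r₁ * hE
  intro x
  linear_combination x * hE + hC

theorem stmt_7 (n l : ℕ) (hn : 3 ≤ n) (hl : 3 ≤ l) :
    ∃ β₁ β₂ β₃ : ℝ, 0 < β₁ ∧ 0 < β₂ ∧ β₃ < 0 ∧
      ∀ x : ℝ, x ^ 3 + ((n : ℝ) + 1 - 2 * n * l) * x ^ 2
          + (2 * (n : ℝ) + l * n ^ 2 - 2 * n ^ 2 - 2) * x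
          + (2 * (l : ℝ) * n ^ 2 - 4 * n)
        = (x - β₁) * (x - β₂) * (x - β₃) := by
  have hn' : (3 : ℝ) ≤ (n : ℝ) := by exact_mod_cast hn
  have hl' : (3 : ℝ) ≤ (l : ℝ) := by exact_mod_cast hl
  set A : ℝ := (n : ℝ) + 1 - 2 * n * l with hA
  set B : ℝ := 2 * (n : ℝ) + l * n ^ 2 - 2 * n ^ 2 - 2 with hB
  set C : ℝ := 2 * (l : ℝ) * n ^ 2 - 4 * n with hC
  set f : ℝ → ℝ := fun x => x ^ 3 + A * x ^ 2 + B * x + C with hf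
  have hcont : Continuous f := by fun_prop
  have hfneg : f (-(n : ℝ)) < 0 := by
    simp only [hf, hA, hB, hC]
    nlinarith [mul_le_mul_of_nonneg_right hl' (by nlinarith : (0:ℝ) ≤ (n:ℝ)^2 * (3*n - 2)),
      sq_nonneg ((n:ℝ) - 3), sq_nonneg (n:ℝ)]
  have hf0 : 0 < f 0 := by
    simp only [hf, hA, hB, hC]
    nlinarith [mul_le_mul_of_nonneg_right hl' (by nlinarith : (0:ℝ) ≤ (n:ℝ)^2)]
  have hfn : f (n : ℝ) < 0 := by
    simp only [hf, hA, hB, hC]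
    nlinarith [mul_le_mul_of_nonneg_right hl' (by nlinarith : (0:ℝ) ≤ (n:ℝ)^2 * (n - 2)),
      sq_nonneg (n:ℝ)]
  -- root r₃ ∈ (-n, 0)
  obtain ⟨r₃, hr₃mem, hr₃⟩ : ∃ r ∈ Set.Ioo (-(n:ℝ)) 0, f r = 0 := by
    have h := intermediate_value_Ioo (by linarith : (-(n:ℝ)) ≤ 0) hcont.continuousOn
    have : (0:ℝ) ∈ Set.Ioo (f (-(n:ℝ))) (f 0) := ⟨hfneg, hf0⟩
    obtain ⟨r, hr, hfr⟩ := h this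
    exact ⟨r, hr, hfr⟩
  -- root r₁ ∈ (0, n)
  obtain ⟨r₁, hr₁mem, hr₁⟩ : ∃ r ∈ Set.Ioo (0:ℝ) (n:ℝ), f r = 0 := by
    have h := intermediate_value_Ioo' (by linarith : (0:ℝ) ≤ (n:ℝ)) hcont.continuousOn
    have : (0:ℝ) ∈ Set.Ioo (f (n:ℝ)) (f 0) := ⟨hfn, hf0⟩
    obtain ⟨r, hr, hfr⟩ := h this
    exact ⟨r, hr, hfr⟩
  obtain ⟨hr₁0, hr₁n⟩ := hr₁mem
  obtain ⟨hr₃n, hr₃0⟩ := hr₃mem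
  have hne : r₁ ≠ r₃ := by linarith
  have key := cubic_factor_s7 A B C r₁ r₃ hne
    (by have := hr₁; simp only [hf] at this; linarith)
    (by have := hr₃; simp only [hf] at this; linarith)
  refine ⟨r₁, -A - r₁ - r₃, r₃, hr₁0, ?_, hr₃0, ?_⟩
  · simp only [hA]; nlinarith
  · intro x
    linear_combination key x
end

section
/- Let n ≥ 3, and let α₁,…,α₅ be the real roots of g(x) = x⁵ + (2-n)x⁴ + (-6n²+n-3)x³ + (-4n²-4)x² + (4n³+12n²-20n+4)x + 16n(n-1), with α₃, α₄, α₅ < 0 < α₂ ≤ α₁. If |α₃| + |α₄| + |α₅| ≥ 2n + 2, then (n-2) + Σᵢ|αᵢ| > (3n-1) + √((1-3n)² + 8n). -/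
theorem stmt_11 (n : ℕ) (hn : 3 ≤ n) (α₁ α₂ α₃ α₄ α₅ : ℝ)
    (h₁ : 0 < α₂) (h₂ : α₂ ≤ α₁) (h₃ : α₃ < 0) (h₄ : α₄ < 0) (h₅ : α₅ < 0)
    (hroots : ∀ x : ℝ, x ^ 5 + (2 - (n : ℝ)) * x ^ 4
        + (-6 * (n : ℝ) ^ 2 + n - 3) * x ^ 3
        + (-4 * (n : ℝ) ^ 2 - 4) * x ^ 2
        + (4 * (n : ℝ) ^ 3 + 12 * n ^ 2 - 20 * n + 4) * x
        + 16 * n * ((n : ℝ) - 1)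
      = (x - α₁) * (x - α₂) * (x - α₃) * (x - α₄) * (x - α₅))
    (hsum : 2 * (n : ℝ) + 2 ≤ |α₃| + |α₄| + |α₅|) :
    (3 * (n : ℝ) - 1) + Real.sqrt ((1 - 3 * (n : ℝ)) ^ 2 + 8 * n)
      < ((n : ℝ) - 2) + (|α₁| + |α₂| + |α₃| + |α₄| + |α₅|) := by
  have hn3 : (3 : ℝ) ≤ (n : ℝ) := by exact_mod_cast hn
  have key : α₁ + α₂ + α₃ + α₄ + α₅ = (n : ℝ) - 2 := by
    linear_combination (hroots 4 - 4 * hroots 3 + 6 * hroots 2 - 4 * hroots 1 + hroots 0) / 24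
  have hsqrt : Real.sqrt ((1 - 3 * (n : ℝ)) ^ 2 + 8 * n) < 3 * (n : ℝ) + 1 := by
    rw [show ((1 - 3 * (n : ℝ)) ^ 2 + 8 * n) = (3 * (n : ℝ) + 1) ^ 2 - 4 * n by ring]
    have h0 : (0 : ℝ) < 3 * (n : ℝ) + 1 := by linarith
    rw [Real.sqrt_lt' h0]
    nlinarith
  rw [abs_of_pos (lt_of_lt_of_le h₁ h₂), abs_of_pos h₁, abs_of_neg h₃, abs_of_neg h₄,
    abs_of_neg h₅] at *
  linarith
end

section
/- Let n ≥ 5 and l ≥ 4. The quintic P(x) = x⁵ + (3n+2-2nl)x⁴ + (7n-3nl-3ln²-3)x³ + (2ln³-4ln²+6ln-12n+4n²-4n³-4)x² + (4ln³+8ln²-4ln-12n-4n²-4n³+4)x + (-8ln³+32ln²-24ln+16n³-48n²+32n) has exactly two negative real roots β₄, β₅ and three positive real roots, and the negative roots satisfy -n² < β₅ < -2n < β₄ < -1. -/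
/-!
The quintic changes sign at `-n², -2n, -1, 0, 2, 2n, 3nl` (signs `-, +, -, -, +, -, +`), so the
intermediate value theorem gives a root in each of the five open intervals between consecutive
points other than `(-1, 0)`. Five distinct roots of a monic quintic are all of its roots, which
gives the factorisation. Each sign check becomes evident after writing `n = 5 + u`, `l = 4 + v` with
`u, v ≥ 0`: the value is then a polynomial in `u, v` whose coefficients all have the same sign.
-/

open Polynomial Set
open scoped NNReal

namespace Polynomial

theorem Monic.eq_prod_X_sub_C_of_nodup {R : Type*} [CommRing R] [IsDomain R] {p : R[X]}
    (hp : p.Monic) {s : Multiset R} (hs : s.Nodup) (hcard : s.card = p.natDegree)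
    (hroots : ∀ r ∈ s, p.IsRoot r) : p = (s.map fun r => X - C r).prod := by
  have hle : s ≤ p.roots := (Multiset.le_iff_subset hs).2 fun r hr =>
    (mem_roots hp.ne_zero).2 (hroots r hr)
  have hs_eq : s = p.roots :=
    Multiset.eq_of_le_of_card_le hle (hcard ▸ card_roots' p)
  subst hs_eq
  exact (prod_multiset_X_sub_C_of_monic_of_roots_card_eq hp hcard).symm

theorem exists_isRoot_mem_Ioo_of_eval_mul_neg (p : ℝ[X]) {x y : ℝ} (hxy : x ≤ y)
    (h : p.eval x * p.eval y < 0) : ∃ z ∈ Ioo x y, p.IsRoot z := by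
  have hcont := p.continuous.continuousOn (s := Icc x y)
  rcases mul_neg_iff.1 h with ⟨hx, hy⟩ | ⟨hx, hy⟩
  · exact intermediate_value_Ioo' hxy hcont ⟨hy, hx⟩
  · exact intermediate_value_Ioo hxy hcont ⟨hx, hy⟩

end Polynomial

noncomputable def quintic (n l : ℝ) : ℝ[X] :=
  X ^ 5 + C (3 * n + 2 - 2 * n * l) * X ^ 4
    + C (7 * n - 3 * n * l - 3 * l * n ^ 2 - 3) * X ^ 3
    + C (2 * l * n ^ 3 - 4 * l * n ^ 2 + 6 * l * n - 12 * n + 4 * n ^ 2 - 4 * n ^ 3 - 4) * X ^ 2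
    + C (4 * l * n ^ 3 + 8 * l * n ^ 2 - 4 * l * n - 12 * n - 4 * n ^ 2 - 4 * n ^ 3 + 4) * X
    + C (-8 * l * n ^ 3 + 32 * l * n ^ 2 - 24 * l * n + 16 * n ^ 3 - 48 * n ^ 2 + 32 * n)

theorem eval_quintic (n l x : ℝ) : (quintic n l).eval x =
    x ^ 5 + (3 * n + 2 - 2 * n * l) * x ^ 4
    + (7 * n - 3 * n * l - 3 * l * n ^ 2 - 3) * x ^ 3
    + (2 * l * n ^ 3 - 4 * l * n ^ 2 + 6 * l * n - 12 * n + 4 * n ^ 2 - 4 * n ^ 3 - 4) * x ^ 2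
    + (4 * l * n ^ 3 + 8 * l * n ^ 2 - 4 * l * n - 12 * n - 4 * n ^ 2 - 4 * n ^ 3 + 4) * x
    + (-8 * l * n ^ 3 + 32 * l * n ^ 2 - 24 * l * n + 16 * n ^ 3 - 48 * n ^ 2 + 32 * n) := by
  simp [quintic]

theorem monic_quintic (n l : ℝ) : (quintic n l).Monic := by
  unfold quintic; monicity!

theorem natDegree_quintic (n l : ℝ) : (quintic n l).natDegree = 5 := by
  unfold quintic; compute_degree!

theorem exists_nnreal_add_eq_of_le {a c : ℝ} (h : c ≤ a) : ∃ u : ℝ≥0, (u : ℝ) + c = a :=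
  ⟨⟨a - c, sub_nonneg.2 h⟩, sub_add_cancel a c⟩

theorem eval_quintic_neg_sq_neg {n l : ℝ} (hn : 5 ≤ n) (hl : 4 ≤ l) :
    (quintic n l).eval (-n ^ 2) < 0 := by
  obtain ⟨u, rfl⟩ := exists_nnreal_add_eq_of_le hn
  obtain ⟨v, rfl⟩ := exists_nnreal_add_eq_of_le hl
  rw [← neg_pos, eval_quintic]; ring_nf; positivity

theorem eval_quintic_neg_two_mul_pos {n l : ℝ} (hn : 5 ≤ n) (hl : 4 ≤ l) :
    0 < (quintic n l).eval (-2 * n) := by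
  obtain ⟨u, rfl⟩ := exists_nnreal_add_eq_of_le hn
  obtain ⟨v, rfl⟩ := exists_nnreal_add_eq_of_le hl
  rw [eval_quintic]; ring_nf; positivity

theorem eval_quintic_neg_one_neg {n l : ℝ} (hn : 5 ≤ n) (hl : 4 ≤ l) :
    (quintic n l).eval (-1) < 0 := by
  obtain ⟨u, rfl⟩ := exists_nnreal_add_eq_of_le hn
  obtain ⟨v, rfl⟩ := exists_nnreal_add_eq_of_le hl
  rw [← neg_pos, eval_quintic]; ring_nf; positivity

theorem eval_quintic_zero_neg {n l : ℝ} (hn : 5 ≤ n) (hl : 4 ≤ l) :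
    (quintic n l).eval 0 < 0 := by
  obtain ⟨u, rfl⟩ := exists_nnreal_add_eq_of_le hn
  obtain ⟨v, rfl⟩ := exists_nnreal_add_eq_of_le hl
  rw [← neg_pos, eval_quintic]; ring_nf; positivity

theorem eval_quintic_two_pos {n l : ℝ} (hn : 5 ≤ n) (hl : 4 ≤ l) :
    0 < (quintic n l).eval 2 := by
  obtain ⟨u, rfl⟩ := exists_nnreal_add_eq_of_le hn
  obtain ⟨v, rfl⟩ := exists_nnreal_add_eq_of_le hl
  rw [eval_quintic]; ring_nf; positivity

theorem eval_quintic_two_mul_neg {n l : ℝ} (hn : 5 ≤ n) (hl : 4 ≤ l) :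
    (quintic n l).eval (2 * n) < 0 := by
  obtain ⟨u, rfl⟩ := exists_nnreal_add_eq_of_le hn
  obtain ⟨v, rfl⟩ := exists_nnreal_add_eq_of_le hl
  rw [← neg_pos, eval_quintic]; ring_nf; positivity

theorem eval_quintic_three_mul_mul_pos {n l : ℝ} (hn : 5 ≤ n) (hl : 4 ≤ l) :
    0 < (quintic n l).eval (3 * n * l) := by
  obtain ⟨u, rfl⟩ := exists_nnreal_add_eq_of_le hn
  obtain ⟨v, rfl⟩ := exists_nnreal_add_eq_of_le hl
  rw [eval_quintic]; ring_nf; positivity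

theorem stmt_13 (n l : ℕ) (hn : 5 ≤ n) (hl : 4 ≤ l) :
    ∃ β₁ β₂ β₃ β₄ β₅ : ℝ, 0 < β₁ ∧ 0 < β₂ ∧ 0 < β₃ ∧
      -(n : ℝ) ^ 2 < β₅ ∧ β₅ < -2 * (n : ℝ) ∧ -2 * (n : ℝ) < β₄ ∧ β₄ < -1 ∧
      ∀ x : ℝ, x ^ 5 + (3 * (n : ℝ) + 2 - 2 * n * l) * x ^ 4
          + (7 * (n : ℝ) - 3 * n * l - 3 * l * n ^ 2 - 3) * x ^ 3
          + (2 * (l : ℝ) * n ^ 3 - 4 * l * n ^ 2 + 6 * l * n - 12 * n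
              + 4 * (n : ℝ) ^ 2 - 4 * n ^ 3 - 4) * x ^ 2
          + (4 * (l : ℝ) * n ^ 3 + 8 * l * n ^ 2 - 4 * l * n - 12 * n
              - 4 * (n : ℝ) ^ 2 - 4 * n ^ 3 + 4) * x
          + (-8 * (l : ℝ) * n ^ 3 + 32 * l * n ^ 2 - 24 * l * n
              + 16 * (n : ℝ) ^ 3 - 48 * n ^ 2 + 32 * n)
        = (x - β₁) * (x - β₂) * (x - β₃) * (x - β₄) * (x - β₅) := by
  have hn' : (5 : ℝ) ≤ n := by exact_mod_cast hn
  have hl' : (4 : ℝ) ≤ l := by exact_mod_cast hl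
  have ivt := @exists_isRoot_mem_Ioo_of_eval_mul_neg (quintic n l)
  obtain ⟨β₅, ⟨h₅, h₅'⟩, hβ₅⟩ := ivt (by nlinarith)
    (mul_neg_of_neg_of_pos (eval_quintic_neg_sq_neg hn' hl')
      (eval_quintic_neg_two_mul_pos hn' hl'))
  obtain ⟨β₄, ⟨h₄, h₄'⟩, hβ₄⟩ := ivt (by linarith)
    (mul_neg_of_pos_of_neg (eval_quintic_neg_two_mul_pos hn' hl')
      (eval_quintic_neg_one_neg hn' hl'))
  obtain ⟨β₁, ⟨h₁, h₁'⟩, hβ₁⟩ := ivt zero_le_two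
    (mul_neg_of_neg_of_pos (eval_quintic_zero_neg hn' hl') (eval_quintic_two_pos hn' hl'))
  obtain ⟨β₂, ⟨h₂, h₂'⟩, hβ₂⟩ := ivt (by linarith)
    (mul_neg_of_pos_of_neg (eval_quintic_two_pos hn' hl') (eval_quintic_two_mul_neg hn' hl'))
  obtain ⟨β₃, ⟨h₃, h₃'⟩, hβ₃⟩ := ivt (by nlinarith)
    (mul_neg_of_neg_of_pos (eval_quintic_two_mul_neg hn' hl')
      (eval_quintic_three_mul_mul_pos hn' hl'))
  refine ⟨β₁, β₂, β₃, β₄, β₅, h₁, by linarith, by linarith, h₅, h₅', h₄, h₄', fun x => ?_⟩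
  have hsorted : List.Pairwise (· < ·) [β₅, β₄, β₁, β₂, β₃] :=
    List.isChain_iff_pairwise.1 (by
      simp only [List.isChain_cons_cons, List.IsChain.singleton, and_true]
      exact ⟨h₅'.trans h₄, by linarith, h₁'.trans h₂, h₂'.trans h₃⟩)
  have hfactor :=
    (monic_quintic n l).eq_prod_X_sub_C_of_nodup (Multiset.coe_nodup.2 hsorted.nodup)
    (by simp [natDegree_quintic]) (by simpa using ⟨hβ₅, hβ₄, hβ₁, hβ₂, hβ₃⟩)
  rw [← eval_quintic, hfactor]
  simp only [Multiset.map_coe, List.map_cons, List.map_nil, Multiset.prod_coe, List.prod_cons,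
    List.prod_nil, mul_one, eval_mul, eval_sub, eval_X, eval_C]
  ring
end

section
/- Let n ≥ 5 and l ≥ 4, and let β₁,…,β₅ be the roots of P(x) = x⁵ + (3n+2-2nl)x⁴ + (7n-3nl-3ln²-3)x³ + (2ln³-4ln²+6ln-12n+4n²-4n³-4)x² + (4ln³+8ln²-4ln-12n-4n²-4n³+4)x + (-8ln³+32ln²-24ln+16n³-48n²+32n), with β₅ ≤ β₄ < 0 < β₃ ≤ β₂ ≤ β₁. Then 2(n(2l-1)-1) < (n-2) + 2n(l-2) + β₁ + β₂ + β₃ - β₄ - β₅. -/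
theorem stmt_14 (n l : ℕ) (hn : 5 ≤ n) (hl : 4 ≤ l) (β₁ β₂ β₃ β₄ β₅ : ℝ)
    (h₁ : β₅ ≤ β₄) (h₂ : β₄ < 0) (h₃ : 0 < β₃) (h₄ : β₃ ≤ β₂) (h₅ : β₂ ≤ β₁)
    (hroots : ∀ x : ℝ, x ^ 5 + (3 * (n : ℝ) + 2 - 2 * n * l) * x ^ 4
        + (7 * (n : ℝ) - 3 * n * l - 3 * l * n ^ 2 - 3) * x ^ 3
        + (2 * (l : ℝ) * n ^ 3 - 4 * l * n ^ 2 + 6 * l * n - 12 * n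
            + 4 * (n : ℝ) ^ 2 - 4 * n ^ 3 - 4) * x ^ 2
        + (4 * (l : ℝ) * n ^ 3 + 8 * l * n ^ 2 - 4 * l * n - 12 * n
            - 4 * (n : ℝ) ^ 2 - 4 * n ^ 3 + 4) * x
        + (-8 * (l : ℝ) * n ^ 3 + 32 * l * n ^ 2 - 24 * l * n
            + 16 * (n : ℝ) ^ 3 - 48 * n ^ 2 + 32 * n)
      = (x - β₁) * (x - β₂) * (x - β₃) * (x - β₄) * (x - β₅)) :
    2 * ((n : ℝ) * (2 * l - 1) - 1)
      < ((n : ℝ) - 2) + 2 * n * ((l : ℝ) - 2) + β₁ + β₂ + β₃ - β₄ - β₅ := by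
  have hN : (5 : ℝ) ≤ (n : ℝ) := by exact_mod_cast hn
  have hL : (4 : ℝ) ≤ (l : ℝ) := by exact_mod_cast hl
  -- sum of the roots (Vieta for the x⁴ coefficient)
  have hsum : β₁ + β₂ + β₃ + β₄ + β₅ = 2 * (n : ℝ) * l - 3 * n - 2 := by
    linear_combination (1/24) * (hroots 2) + (1/24) * (hroots (-2))
      - (1/6) * (hroots 1) - (1/6) * (hroots (-1)) + (1/4) * (hroots 0)
  set u : ℝ := -(2 * (n : ℝ) - 1) with hu_def
  have hu_neg : u < 0 := by rw [hu_def]; linarith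
  -- P(u) > 0
  have hPu : 0 < (u - β₁) * (u - β₂) * (u - β₃) * (u - β₄) * (u - β₅) := by
    rw [← hroots u, hu_def]
    have hc : (0 : ℝ) ≤ 20 * (n:ℝ)^4 - 44 * (n:ℝ)^3 + 51 * (n:ℝ)^2 - 27 * (n:ℝ) := by
      nlinarith [sq_nonneg ((n:ℝ)), sq_nonneg ((n:ℝ) - 2)]
    have hm := mul_le_mul_of_nonneg_right hL hc
    nlinarith [hm, hN, sq_nonneg ((n:ℝ))]
  -- P(-2) < 0
  have hPm2 : ((-2 : ℝ) - β₁) * ((-2 : ℝ) - β₂) * ((-2 : ℝ) - β₃) * ((-2 : ℝ) - β₄)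
      * ((-2 : ℝ) - β₅) < 0 := by
    rw [← hroots (-2)]
    nlinarith [mul_pos (mul_pos (show (0:ℝ) < (l:ℝ) - 1 by linarith)
      (show (0:ℝ) < (n:ℝ) - 3 by linarith)) (show (0:ℝ) < (n:ℝ)^2 by positivity)]
  -- product of the first three factors is negative at u
  have h3u : (u - β₁) * (u - β₂) * (u - β₃) < 0 := by
    have h12 : 0 < (u - β₁) * (u - β₂) :=
      mul_pos_of_neg_of_neg (by linarith) (by linarith)
    exact mul_neg_of_pos_of_neg h12 (by linarith)
  -- hence (u-β₄)(u-β₅) < 0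
  have hQu : (u - β₄) * (u - β₅) < 0 := by
    by_contra h
    push_neg at h
    linarith [mul_nonpos_of_nonpos_of_nonneg h3u.le h, hPu]
  -- β₅ < u
  have h5u : β₅ < u := by
    by_contra h
    push_neg at h
    linarith [mul_nonneg (show (0:ℝ) ≤ β₄ - u by linarith) (show (0:ℝ) ≤ β₅ - u by linarith), hQu]
  -- first three factors negative at -2
  have h3m2 : ((-2 : ℝ) - β₁) * ((-2 : ℝ) - β₂) * ((-2 : ℝ) - β₃) < 0 := by
    have h12 : 0 < ((-2 : ℝ) - β₁) * ((-2 : ℝ) - β₂) :=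
      mul_pos_of_neg_of_neg (by linarith) (by linarith)
    exact mul_neg_of_pos_of_neg h12 (by linarith)
  -- hence (-2-β₄)(-2-β₅) > 0
  have hQm2 : 0 < ((-2 : ℝ) - β₄) * ((-2 : ℝ) - β₅) := by
    by_contra h
    push_neg at h
    linarith [mul_nonneg (neg_nonneg.mpr h3m2.le) (neg_nonneg.mpr h), hPm2]
  -- β₄ < -2, since -2-β₅ > 0
  have h5m2 : 0 < (-2 : ℝ) - β₅ := by
    have : u ≤ -2 := by rw [hu_def]; linarith
    linarith
  have h4m2 : β₄ < -2 := by
    by_contra h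
    push_neg at h
    linarith [mul_nonpos_of_nonpos_of_nonneg (show (-2 : ℝ) - β₄ ≤ 0 by linarith) h5m2.le, hQm2]
  have h5bound : β₅ < -(2 * (n : ℝ) - 1) := by rw [← hu_def]; exact h5u
  linarith
end

section
/- Let n ≥ 4 and l ≥ 4. The quartic P(x) = x⁴ - (2nl-3n+1)x³ - (2n-2nl+3ln²+2)x² + (4n-12ln+2ln²+2ln³+4n²-4n³)x + (16n-24n²+8n³-16ln+16ln²-4ln³) has exactly one negative real root α₄, which satisfies -2n < α₄ < -2n+1. -/
lemma aux_key (A B C D y₁ y₂ : ℝ) (hB : 0 < B) (hC : 0 < C) (hD : D < 0)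
    (h1 : 0 < y₁) (h12 : y₁ < y₂)
    (e1 : y₁^4 + A*y₁^3 - B*y₁^2 - C*y₁ + D = 0)
    (e2 : y₂^4 + A*y₂^3 - B*y₂^2 - C*y₂ + D = 0) : False := by
  have h2 : 0 < y₂ := h1.trans h12
  have h0 : y₁^3*y₂^3*(y₂-y₁) + B*(y₁^2*y₂^2*(y₂-y₁)) + C*(y₁*y₂*(y₂^2-y₁^2))
      + (-D)*(y₂^3-y₁^3) = 0 := by linear_combination y₁^3 * e2 - y₂^3 * e1
  have t1 : 0 < y₁^3*y₂^3*(y₂-y₁) :=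
    mul_pos (mul_pos (pow_pos h1 3) (pow_pos h2 3)) (sub_pos.2 h12)
  have t2 : 0 < B*(y₁^2*y₂^2*(y₂-y₁)) :=
    mul_pos hB (mul_pos (mul_pos (pow_pos h1 2) (pow_pos h2 2)) (sub_pos.2 h12))
  have t3 : 0 < C*(y₁*y₂*(y₂^2-y₁^2)) := by
    apply mul_pos hC
    apply mul_pos (mul_pos h1 h2)
    nlinarith
  have t4 : 0 < (-D)*(y₂^3-y₁^3) := by
    apply mul_pos (by linarith)
    have h := pow_lt_pow_left₀ h12 h1.le (n := 3) (by norm_num)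
    linarith
  linarith

theorem stmt_15 (n l : ℕ) (hn : 4 ≤ n) (hl : 4 ≤ l) :
    ∃ α₄ : ℝ, α₄ < 0 ∧ -2 * (n : ℝ) < α₄ ∧ α₄ < -2 * (n : ℝ) + 1 ∧
      (α₄ ^ 4 - (2 * (n : ℝ) * l - 3 * n + 1) * α₄ ^ 3
        - (2 * (n : ℝ) - 2 * n * l + 3 * l * n ^ 2 + 2) * α₄ ^ 2
        + (4 * (n : ℝ) - 12 * l * n + 2 * l * n ^ 2 + 2 * l * n ^ 3
            + 4 * n ^ 2 - 4 * n ^ 3) * α₄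
        + (16 * (n : ℝ) - 24 * n ^ 2 + 8 * n ^ 3 - 16 * l * n
            + 16 * l * n ^ 2 - 4 * l * n ^ 3)) = 0 ∧
      ∀ x : ℝ, x < 0 →
        (x ^ 4 - (2 * (n : ℝ) * l - 3 * n + 1) * x ^ 3
          - (2 * (n : ℝ) - 2 * n * l + 3 * l * n ^ 2 + 2) * x ^ 2
          + (4 * (n : ℝ) - 12 * l * n + 2 * l * n ^ 2 + 2 * l * n ^ 3
              + 4 * n ^ 2 - 4 * n ^ 3) * x
          + (16 * (n : ℝ) - 24 * n ^ 2 + 8 * n ^ 3 - 16 * l * n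
              + 16 * l * n ^ 2 - 4 * l * n ^ 3)) = 0 → x = α₄ := by
  have hN : (4:ℝ) ≤ (n:ℝ) := by exact_mod_cast hn
  have hL : (4:ℝ) ≤ (l:ℝ) := by exact_mod_cast hl
  set N : ℝ := (n:ℝ) with hNdef
  set L : ℝ := (l:ℝ) with hLdef
  set f : ℝ → ℝ := fun x => x ^ 4 - (2 * N * L - 3 * N + 1) * x ^ 3
          - (2 * N - 2 * N * L + 3 * L * N ^ 2 + 2) * x ^ 2
          + (4 * N - 12 * L * N + 2 * L * N ^ 2 + 2 * L * N ^ 3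
              + 4 * N ^ 2 - 4 * N ^ 3) * x
          + (16 * N - 24 * N ^ 2 + 8 * N ^ 3 - 16 * L * N
              + 16 * L * N ^ 2 - 4 * L * N ^ 3) with hfdef
  -- coefficient signs for the y = -x form
  have hN0 : (0:ℝ) < N := by linarith
  have hL0 : (0:ℝ) < L := by linarith
  have hB : 0 < 2 * N - 2 * N * L + 3 * L * N ^ 2 + 2 := by
    nlinarith [mul_pos (mul_pos hN0 hL0) (by linarith : (0:ℝ) < 3 * N - 2)]
  have hC : 0 < 4 * N - 12 * L * N + 2 * L * N ^ 2 + 2 * L * N ^ 3 + 4 * N ^ 2 - 4 * N ^ 3 := by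
    have hsq : (0:ℝ) ≤ N ^ 2 - 12 := by nlinarith
    have h1 : (0:ℝ) ≤ L * N * (N ^ 2 - 12) := by positivity
    have h2 : (0:ℝ) ≤ N ^ 3 * (L - 4) := by
      apply mul_nonneg (by positivity); linarith
    have h3 : (0:ℝ) ≤ L * N ^ 2 := by positivity
    nlinarith [h1, h2, h3]
  have hD : 16 * N - 24 * N ^ 2 + 8 * N ^ 3 - 16 * L * N + 16 * L * N ^ 2 - 4 * L * N ^ 3 < 0 := by
    have hin : (0:ℝ) < L * (N - 2) - 2 * N + 2 := by
      nlinarith [mul_nonneg (by linarith : (0:ℝ) ≤ L - 4) (by linarith : (0:ℝ) ≤ N - 2)]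
    nlinarith [mul_pos (mul_pos hN0 (by linarith : (0:ℝ) < N - 2)) hin]
  -- endpoint values
  have hfa : 0 < f (-2 * N) := by
    have : f (-2 * N) = 8 * N * (L - 1) * (5 * N - 2) := by simp only [hfdef]; ring
    rw [this]; nlinarith
  have hfb : f (-2 * N + 1) < 0 := by
    have : f (-2 * N + 1) = N * (27 - 34 * N) - 2 + N^2 * L * (43 - 10 * N) - 28 * N * L := by
      simp only [hfdef]; ring
    rw [this]; nlinarith
  have hcont : ContinuousOn f (Set.Icc (-2 * N) (-2 * N + 1)) := by
    apply Continuous.continuousOn; simp only [hfdef]; fun_prop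
  have hab : (-2 * N) ≤ -2 * N + 1 := by linarith
  have hmem : (0:ℝ) ∈ Set.Ioo (f (-2 * N + 1)) (f (-2 * N)) := ⟨hfb, hfa⟩
  obtain ⟨α, hαmem, hαval⟩ := intermediate_value_Ioo' hab hcont hmem
  have hα1 : -2 * N < α := hαmem.1
  have hα2 : α < -2 * N + 1 := hαmem.2
  have hαneg : α < 0 := by nlinarith
  refine ⟨α, hαneg, hα1, hα2, hαval, ?_⟩
  intro x hx hxval
  by_contra hne
  have key : ∀ x₁ x₂ : ℝ, x₂ < 0 → x₁ < x₂ → f x₁ = 0 → f x₂ = 0 → False := by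
    intro x₁ x₂ hx2 h12 e1 e2
    apply aux_key (2 * N * L - 3 * N + 1) (2 * N - 2 * N * L + 3 * L * N ^ 2 + 2)
      (4 * N - 12 * L * N + 2 * L * N ^ 2 + 2 * L * N ^ 3 + 4 * N ^ 2 - 4 * N ^ 3)
      (16 * N - 24 * N ^ 2 + 8 * N ^ 3 - 16 * L * N + 16 * L * N ^ 2 - 4 * L * N ^ 3)
      (-x₂) (-x₁) hB hC hD (by linarith) (by linarith)
    · linear_combination e2
    · linear_combination e1
  rcases lt_or_gt_of_ne hne with h | h
  · exact key x α hαneg h hxval hαval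
  · exact key α x hx h hαval hxval
end

section
/- Let n ≥ 4 and l ≥ 4, and let α₁, α₂, α₃ > 0 > α₄ be the roots of P(x) = x⁴ - (2nl-3n+1)x³ - (2n-2nl+3ln²+2)x² + (4n-12ln+2ln²+2ln³+4n²-4n³)x + 16n-24n²+8n³-16ln+16ln²-4ln³. Then (n-1) + 2n(l-1) + n(2l-1) - 1 < (n-1) + 2 + 2n(l-2) + α₁ + α₂ + α₃ - α₄. -/
theorem stmt_16 (n l : ℕ) (hn : 4 ≤ n) (hl : 4 ≤ l) (α₁ α₂ α₃ α₄ : ℝ)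
    (h₁ : 0 < α₁) (h₂ : 0 < α₂) (h₃ : 0 < α₃) (h₄ : α₄ < 0)
    (hroots : ∀ x : ℝ, x ^ 4 - (2 * (n : ℝ) * l - 3 * n + 1) * x ^ 3
        - (2 * (n : ℝ) - 2 * n * l + 3 * l * n ^ 2 + 2) * x ^ 2
        + (4 * (n : ℝ) - 12 * l * n + 2 * l * n ^ 2 + 2 * l * n ^ 3
            + 4 * n ^ 2 - 4 * n ^ 3) * x
        + (16 * (n : ℝ) - 24 * n ^ 2 + 8 * n ^ 3 - 16 * l * n
            + 16 * l * n ^ 2 - 4 * l * n ^ 3)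
      = (x - α₁) * (x - α₂) * (x - α₃) * (x - α₄)) :
    ((n : ℝ) - 1) + 2 * n * ((l : ℝ) - 1) + (n : ℝ) * (2 * l - 1) - 1
      < ((n : ℝ) - 1) + 2 + 2 * n * ((l : ℝ) - 2) + α₁ + α₂ + α₃ - α₄ := by
  have hn' : (4 : ℝ) ≤ (n : ℝ) := by exact_mod_cast hn
  have hl' : (4 : ℝ) ≤ (l : ℝ) := by exact_mod_cast hl
  -- sum of roots
  have hsum : α₁ + α₂ + α₃ + α₄ = 2 * (n : ℝ) * l - 3 * n + 1 := by
    have e1 := hroots 1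
    have e2 := hroots (-1)
    have e3 := hroots 2
    have e4 := hroots (-2)
    linear_combination (-1/6) * e1 + (1/6) * e2 + (1/12) * e3 - (1/12) * e4
  -- value at t = 2 - 2n is negative
  set t : ℝ := 2 - 2 * (n : ℝ) with ht
  have htneg : t < 0 := by simp only [ht]; linarith
  have hPt := hroots t
  have hPlt : (t - α₁) * (t - α₂) * (t - α₃) * (t - α₄) < 0 := by
    rw [← hPt]
    have hval : t ^ 4 - (2 * (n : ℝ) * l - 3 * n + 1) * t ^ 3
        - (2 * (n : ℝ) - 2 * n * l + 3 * l * n ^ 2 + 2) * t ^ 2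
        + (4 * (n : ℝ) - 12 * l * n + 2 * l * n ^ 2 + 2 * l * n ^ 3
            + 4 * n ^ 2 - 4 * n ^ 3) * t
        + (16 * (n : ℝ) - 24 * n ^ 2 + 8 * n ^ 3 - 16 * l * n
            + 16 * l * n ^ 2 - 4 * l * n ^ 3)
        = 16 * (n : ℝ) - 16 * n ^ 2 + l * (-48 * n + 64 * n ^ 2 - 20 * n ^ 3) := by
      simp only [ht]; ring
    rw [hval]
    have hc : (-48 * (n : ℝ) + 64 * n ^ 2 - 20 * n ^ 3) < 0 := by nlinarith
    have hlc : (l : ℝ) * (-48 * (n : ℝ) + 64 * n ^ 2 - 20 * n ^ 3)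
        ≤ 4 * (-48 * (n : ℝ) + 64 * n ^ 2 - 20 * n ^ 3) := by nlinarith
    nlinarith
  -- hence α₄ < t
  have hα₄ : α₄ < t := by
    clear hroots hsum hPt
    by_contra h
    push_neg at h
    have h1 : t - α₁ < 0 := by linarith
    have h2 : t - α₂ < 0 := by linarith
    have h3 : t - α₃ < 0 := by linarith
    have h4' : t - α₄ ≤ 0 := by linarith
    have hp1 : 0 < (t - α₁) * (t - α₂) := mul_pos_of_neg_of_neg h1 h2
    have hp2 : 0 ≤ (t - α₃) * (t - α₄) := by
      have key : (t - α₃) * (t - α₄) = (-(t - α₃)) * (-(t - α₄)) := by ring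
      rw [key]
      exact mul_nonneg (by linarith) (by linarith)
    have hp3 : 0 ≤ (t - α₁) * (t - α₂) * ((t - α₃) * (t - α₄)) :=
      mul_nonneg hp1.le hp2
    have heq : (t - α₁) * (t - α₂) * (t - α₃) * (t - α₄)
        = (t - α₁) * (t - α₂) * ((t - α₃) * (t - α₄)) := by ring
    linarith [heq ▸ hPlt]
  simp only [ht] at hα₄
  linarith
end

section
/- Let n ≥ 2 and l ≥ 2, and let B be the (l+1)×(l+1) real matrix with B₁₁ = n-1, B₁ⱼ = n for j ≥ 2, Bᵢ₁ = n for i ≥ 2, Bᵢᵢ = 0 for i ≥ 2, and Bᵢⱼ = 2n for i ≠ j, i,j ≥ 2. Then the characteristic polynomial of B is (-1)^{l+1}(x+2n)^{l-1}(x² + x(1-n(2l-1)) + n²(l-2) - 2n(l-1)). -/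
theorem stmt_18 (n l : ℕ) (hn : 2 ≤ n) (hl : 2 ≤ l)
    (B : Matrix (Fin (l + 1)) (Fin (l + 1)) ℝ)
    (hB : ∀ i j : Fin (l + 1),
      B i j = if i = 0 ∧ j = 0 then (n : ℝ) - 1
        else if i = 0 ∨ j = 0 then (n : ℝ)
        else if i = j then 0 else 2 * n) :
    ∀ x : ℝ, (B - x • (1 : Matrix (Fin (l + 1)) (Fin (l + 1)) ℝ)).det
      = (-1) ^ (l + 1) * (x + 2 * n) ^ (l - 1)
        * (x ^ 2 + x * (1 - (n : ℝ) * (2 * l - 1))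
            + (n : ℝ) ^ 2 * ((l : ℝ) - 2) - 2 * n * ((l : ℝ) - 1)) := by
  have hsum : ∀ p q : ℝ, (∑ j : Fin (l + 1), if j = 0 then p else q) = p + l * q := by
    intro p q
    rw [Fin.sum_univ_succ]
    simp [Fin.succ_ne_zero, Finset.sum_const, nsmul_eq_mul]
  set U : Matrix (Fin (l + 1)) (Fin 2) ℝ :=
    fun i a => if a = 0 then 1 else if i = 0 then 1 else 0 with hU
  set W : Matrix (Fin 2) (Fin (l + 1)) ℝ :=
    fun a j => if a = 0 then (if j = 0 then (n : ℝ) else 2 * n)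
      else (if j = 0 then 2 * (n : ℝ) - 1 else -n) with hW
  have hU0 : ∀ j : Fin (l + 1), U j 0 = 1 := fun j => if_pos rfl
  have hU1 : ∀ j : Fin (l + 1), U j 1 = if j = 0 then 1 else 0 := fun j => if_neg (by decide)
  have hW0 : ∀ j : Fin (l + 1), W 0 j = if j = 0 then (n : ℝ) else 2 * n := fun j => if_pos rfl
  have hW1 : ∀ j : Fin (l + 1), W 1 j = if j = 0 then 2 * (n : ℝ) - 1 else -n :=
    fun j => if_neg (by decide)
  have key : ∀ x : ℝ, x + 2 * (n : ℝ) ≠ 0 →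
      (B - x • (1 : Matrix (Fin (l + 1)) (Fin (l + 1)) ℝ)).det
      = (-1) ^ (l + 1) * (x + 2 * n) ^ (l - 1)
        * (x ^ 2 + x * (1 - (n : ℝ) * (2 * l - 1))
            + (n : ℝ) ^ 2 * ((l : ℝ) - 2) - 2 * n * ((l : ℝ) - 1)) := by
    intro x hx
    set c : ℝ := -(x + 2 * n) with hcdef
    have hc : c ≠ 0 := neg_ne_zero.mpr hx
    have hM : B - x • (1 : Matrix (Fin (l + 1)) (Fin (l + 1)) ℝ)
        = c • ((1 : Matrix (Fin (l + 1)) (Fin (l + 1)) ℝ) + c⁻¹ • (U * W)) := by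
      rw [smul_add, smul_smul, mul_inv_cancel₀ hc, one_smul]
      ext i j
      rw [Matrix.sub_apply, Matrix.add_apply, Matrix.smul_apply, Matrix.smul_apply,
        Matrix.mul_apply, Fin.sum_univ_two, hB, hU0, hU1, hW0, hW1]
      simp only [Matrix.one_apply, smul_eq_mul]
      rcases eq_or_ne i 0 with hi | hi
      · rcases eq_or_ne j 0 with hj | hj
        · subst hi; subst hj; simp [hcdef]; ring
        · subst hi; simp [hj, Ne.symm hj, hcdef]; try ring
      · rcases eq_or_ne j 0 with hj | hj
        · subst hj; simp [hi, hcdef]; try ring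
        · rcases eq_or_ne i j with hij | hij
          · subst hij; simp [hi, hcdef]; try ring
          · simp [hi, hj, hij, hcdef]; try ring
    have e00 : (W * (c⁻¹ • U)) 0 0 = c⁻¹ * ((n : ℝ) + 2 * n * l) := by
      rw [Matrix.mul_apply]
      rw [Finset.sum_congr rfl (fun j _ =>
        (by rw [Matrix.smul_apply, smul_eq_mul, hU0, hW0]; split_ifs <;> ring :
          W 0 j * (c⁻¹ • U) j 0 = if j = 0 then c⁻¹ * n else c⁻¹ * (2 * n))), hsum]
      ring
    have e01 : (W * (c⁻¹ • U)) 0 1 = c⁻¹ * (n : ℝ) := by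
      rw [Matrix.mul_apply]
      rw [Finset.sum_congr rfl (fun j _ =>
        (by rw [Matrix.smul_apply, smul_eq_mul, hU1, hW0]; split_ifs <;> ring :
          W 0 j * (c⁻¹ • U) j 1 = if j = 0 then c⁻¹ * n else 0)), hsum]
      ring
    have e10 : (W * (c⁻¹ • U)) 1 0 = c⁻¹ * (2 * (n : ℝ) - 1 - n * l) := by
      rw [Matrix.mul_apply]
      rw [Finset.sum_congr rfl (fun j _ =>
        (by rw [Matrix.smul_apply, smul_eq_mul, hU0, hW1]; split_ifs <;> ring :
          W 1 j * (c⁻¹ • U) j 0 = if j = 0 then c⁻¹ * (2 * n - 1) else c⁻¹ * (-n))), hsum]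
      ring
    have e11 : (W * (c⁻¹ • U)) 1 1 = c⁻¹ * (2 * (n : ℝ) - 1) := by
      rw [Matrix.mul_apply]
      rw [Finset.sum_congr rfl (fun j _ =>
        (by rw [Matrix.smul_apply, smul_eq_mul, hU1, hW1]; split_ifs <;> ring :
          W 1 j * (c⁻¹ • U) j 1 = if j = 0 then c⁻¹ * (2 * n - 1) else 0)), hsum]
      ring
    rw [hM, Matrix.det_smul, ← Matrix.smul_mul, Matrix.det_one_add_mul_comm,
      Matrix.det_fin_two]
    simp only [Matrix.add_apply, Matrix.one_apply_eq, e00, e01, e10, e11, Fintype.card_fin]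
    have hone : ((1 : Matrix (Fin 2) (Fin 2) ℝ) 0 1 : ℝ) = 0 := by
      simp [Matrix.one_apply]
    have hone' : ((1 : Matrix (Fin 2) (Fin 2) ℝ) 1 0 : ℝ) = 0 := by
      simp [Matrix.one_apply]
    rw [hone, hone']
    have hcp : c ^ (l + 1) = c ^ (l - 1) * c ^ 2 := by
      rw [← pow_add]; congr 1; omega
    have hneg : c ^ (l - 1) = (-1 : ℝ) ^ (l + 1) * (x + 2 * n) ^ (l - 1) := by
      rw [hcdef, neg_pow]
      congr 1
      rw [show l + 1 = (l - 1) + 2 from by omega, pow_add]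
      norm_num
    have hQ : c ^ 2 * ((1 + c⁻¹ * ((n : ℝ) + 2 * n * l)) * (1 + c⁻¹ * (2 * (n : ℝ) - 1))
          - (0 + c⁻¹ * (n : ℝ)) * (0 + c⁻¹ * (2 * (n : ℝ) - 1 - n * l)))
        = (x ^ 2 + x * (1 - (n : ℝ) * (2 * l - 1))
            + (n : ℝ) ^ 2 * ((l : ℝ) - 2) - 2 * n * ((l : ℝ) - 1)) := by
      field_simp
      rw [hcdef]
      ring
    rw [hcp, mul_assoc, hQ, hneg]
  intro x
  have cont1 : Continuous fun y : ℝ =>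
      (B - y • (1 : Matrix (Fin (l + 1)) (Fin (l + 1)) ℝ)).det :=
    Continuous.matrix_det (continuous_const.sub (continuous_id.smul continuous_const))
  have cont2 : Continuous fun y : ℝ => (-1 : ℝ) ^ (l + 1) * (y + 2 * n) ^ (l - 1)
        * (y ^ 2 + y * (1 - (n : ℝ) * (2 * l - 1))
            + (n : ℝ) ^ 2 * ((l : ℝ) - 2) - 2 * n * ((l : ℝ) - 1)) := by
    fun_prop
  have heq := Continuous.ext_on (dense_compl_singleton (-(2 * (n : ℝ)))) cont1 cont2
    (fun y hy => key y (by
      intro h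
      exact hy (by simpa using by linarith : y ∈ ({-(2 * (n : ℝ))} : Set ℝ))))
  exact congrFun heq x
end
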